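/- Inert combinatorial graph maps are closed under composition, active combinatorial graph maps are closed under composition, and a combinatorial graph map that is both inert and active is an isomorphism of graphs. -/

import Mathlib

/-- A graph: finite sets `V` of vertices and `A` of arcs (half-edges), a fixed-point
free involution `† = dag` on arcs, and an endpoint map `t : A → V ⊔ {∞}`
(we encode `V ⊔ {∞}` as `Option V` with `∞ = none`). -/
structure CGraph : Type 1 where
  V : Type
  A : Type
  [fintypeV : Fintype V]
  [fintypeA : Fintype A]
  dag : A → A
  dag_dag : ∀ a, dag (dag a) = a
  dag_ne : ∀ a, dag a ≠ a
  t : A → Option V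

attribute [instance] CGraph.fintypeV CGraph.fintypeA

namespace CGraph

/-- The generating relation on `V ⊔ A`: an arc touches its `†`-partner, and an arc
touches its endpoint (when the endpoint is a vertex). -/
inductive Touch (G : CGraph) : (G.V ⊕ G.A) → (G.V ⊕ G.A) → Prop
  | dag (a : G.A) : Touch G (Sum.inr a) (Sum.inr (G.dag a))
  | incid (a : G.A) (v : G.V) : G.t a = some v → Touch G (Sum.inr a) (Sum.inl v)

/-- A graph is connected if `V ⊔ A` is nonempty and the equivalence relation generated
by `Touch` has exactly one equivalence class. -/
def Connected (G : CGraph) : Prop :=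
  Nonempty (G.V ⊕ G.A) ∧ ∀ x y : G.V ⊕ G.A, Relation.EqvGen G.Touch x y

/-- The valence of a vertex: the number of arcs ending at it. -/
noncomputable def valence (G : CGraph) (v : G.V) : ℕ :=
  Nat.card {a : G.A // G.t a = some v}

/-- A vertex is bivalent if exactly two arcs end at it. -/
def Bivalent (G : CGraph) (v : G.V) : Prop := G.valence v = 2

/-- `x ∈ V ⊔ {∞}` is bivalent or `∞`. -/
def BivAt (G : CGraph) (x : Option G.V) : Prop :=
  x = none ∨ ∃ v, x = some v ∧ G.Bivalent v

/-- `IsPath G l s e`: the list of arcs `l = [a₁, …, aₙ]` is a path from `s` to `e`: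
`t(a₁†) = s`, `t(aᵢ) = t(aᵢ₊₁†)` for `i < n`, and `t(aₙ) = e`; the empty path is a
path from `s` to `e` exactly when `s = e`. -/
def IsPath (G : CGraph) : List G.A → Option G.V → Option G.V → Prop
  | [], s, e => s = e
  | a :: l, s, e => G.t (G.dag a) = s ∧ G.IsPath l (G.t a) e

/-- A path is bivalent if each of its intermediate vertices `t(aᵢ)`, `i < n`, is
bivalent or `∞`. -/
def IsBivalentPath (G : CGraph) (l : List G.A) (s e : Option G.V) : Prop :=
  G.IsPath l s e ∧
    ∀ (i : ℕ) (h : i + 1 < l.length), G.BivAt (G.t (l.get ⟨i, Nat.lt_of_succ_lt h⟩))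

/-- The underlying data of a combinatorial graph map `Γ → Λ`: a basepoint-preserving
map on vertices-with-∞ and a map on arcs in the opposite direction. -/
structure PreMap (G H : CGraph) : Type where
  fv : Option G.V → Option H.V
  fa : H.A → G.A

/-- `FiberList f a l`: the list `l` enumerates `f_a⁻¹(a)` (without repetitions) and is
a bivalent path in the target graph between the images of the endpoints of `a`
(oriented so that the identity map is a graph map). -/
def FiberList {G H : CGraph} (f : PreMap G H) (a : G.A) (l : List H.A) : Prop :=
  (∀ b : H.A, b ∈ l ↔ f.fa b = a) ∧ l.Nodup ∧
    H.IsBivalentPath l (f.fv (G.t (G.dag a))) (f.fv (G.t a))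

/-- `MidVertexOf H l w`: `w` occurs as an intermediate vertex of the path `l`. -/
def MidVertexOf (H : CGraph) (l : List H.A) (w : H.V) : Prop :=
  ∃ (i : ℕ) (h : i + 1 < l.length), H.t (l.get ⟨i, Nat.lt_of_succ_lt h⟩) = some w

/-- `OnFiberPath f w a`: the vertex `w` of the target occurs as an intermediate vertex
of the bivalent path enumerating `f_a⁻¹(a)`. -/
def OnFiberPath {G H : CGraph} (f : PreMap G H) (w : H.V) (a : G.A) : Prop :=
  ∃ l : List H.A, FiberList f a l ∧ MidVertexOf H l w

/-- The conditions for a pair `(f_v, f_a)` to be a combinatorial graph map: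
(1) `f_v(∞) = ∞`; (2) `f_a` commutes with `†`; (3) each `f_a⁻¹(a)` admits an ordering
making it a bivalent path between the images of the endpoints of `a`; (4) vertices
identified by `f_v` are joined by a path of arcs outside the image of `f_a`;
(5) each vertex of the target not in the image of `f_v` is bivalent and occurs as an
intermediate vertex of exactly one of the bivalent paths from (3) (where the paths of
an arc and of its `†`-partner are regarded as the same path). -/
def IsGraphMap {G H : CGraph} (f : PreMap G H) : Prop :=
  f.fv none = none ∧
  (∀ b : H.A, f.fa (H.dag b) = G.dag (f.fa b)) ∧
  (∀ a : G.A, ∃ l : List H.A, FiberList f a l) ∧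
  (∀ v v' : G.V, f.fv (some v) = f.fv (some v') → f.fv (some v) ≠ none →
    ∃ l : List G.A, (∀ c ∈ l, c ∉ Set.range f.fa) ∧ G.IsPath l (some v) (some v')) ∧
  (∀ w : H.V, (∀ v : G.V, f.fv (some v) ≠ some w) →
    H.Bivalent w ∧ ∃ a : G.A, OnFiberPath f w a ∧
      ∀ a' : G.A, OnFiberPath f w a' → a' = a ∨ a' = G.dag a)

/-- The identity pre-map. -/
def PreMap.id (G : CGraph) : PreMap G G := ⟨fun x => x, fun a => a⟩

/-- Composition of pre-maps: `f` first, then `g`. -/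
def PreMap.comp {G H K : CGraph} (f : PreMap G H) (g : PreMap H K) : PreMap G K :=
  ⟨g.fv ∘ f.fv, f.fa ∘ g.fa⟩

/-- A combinatorial graph map is inert if `f_v⁻¹(w)` has exactly one element for every
vertex `w` of the target, and `f_a⁻¹(a)` is empty only when `f_v(t(a)) = ∞`. -/
def IsInert {G H : CGraph} (f : PreMap G H) : Prop :=
  (∀ w : H.V, ∃! v : G.V, f.fv (some v) = some w) ∧
  (∀ a : G.A, (∀ b : H.A, f.fa b ≠ a) → f.fv (G.t a) = none)

/-- A combinatorial graph map is active if `f_v⁻¹(∞) = {∞}` and none of the bivalent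
paths `f_a⁻¹(a)` passes through `∞`. -/
def IsActive {G H : CGraph} (f : PreMap G H) : Prop :=
  (∀ x : Option G.V, f.fv x = none → x = none) ∧
  (∀ (a : G.A) (l : List H.A), FiberList f a l →
    ∀ (i : ℕ) (h : i + 1 < l.length), H.t (l.get ⟨i, Nat.lt_of_succ_lt h⟩) ≠ none)

/-- An isomorphism of graphs: a graph map with a two-sided inverse graph map. -/
def IsGraphIso {G H : CGraph} (f : PreMap G H) : Prop :=
  IsGraphMap f ∧ ∃ g : PreMap H G, IsGraphMap g ∧
    f.comp g = PreMap.id G ∧ g.comp f = PreMap.id H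

end CGraph

/-
Both composition laws rest on one observation: the last arc of the fibre path over `a` ends
at `f_v(t(a))`. If `g ∘ f` has an empty fibre over `a`, then so does `g` over the last arc of
the `f`-fibre of `a`, whence `g_v(f_v(t(a))) = ∞`. For active maps, an arc ending at `∞` can
only be the last arc of its fibre path, so it lies over an arc ending at `∞` and is determined
by its image; both properties pass to composites. If a composite fibre path over `a` passed
through `∞` at an intermediate vertex, then `t(a†) = ∞`, so the path also starts at `∞`, and
the reversed first arc would coincide with the reverse of the arc right after that vertex.

For an inert active map, `f_v` is a bijection. An arc with empty fibre would end at `∞` on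
both sides and form a connected component by itself, so all fibres are nonempty. An
intermediate vertex `w` of a fibre path is bivalent, with both of its arcs on that path; but
by connectivity the preimage of `w` has an incoming arc `c`, and the fibre path of `c` ends
at `w` too, which forces a repetition in the path or a clash with `† ≠ id`. Hence `f_a` is a
bijection compatible with endpoints, and the inverse pair is a graph map.
-/

theorem List.eq_getLast_of_not_of_forall_get {α : Type*} {l : List α} {P : α → Prop}
    (hP : ∀ (i : ℕ) (h : i + 1 < l.length), P (l.get ⟨i, Nat.lt_of_succ_lt h⟩))
    {b : α} (hb : b ∈ l) (hbP : ¬ P b) : b = l.getLast (List.ne_nil_of_mem hb) := by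
  by_contra hne
  obtain ⟨i, hi, rfl⟩ := List.getElem_of_mem (List.mem_dropLast_of_mem_of_ne_getLast hb hne)
  rw [List.length_dropLast] at hi
  exact hbP (by simpa [List.getElem_dropLast] using hP i (by omega))

namespace CGraph

variable {G H K : CGraph}

theorem dag_involutive (G : CGraph) : Function.Involutive G.dag := G.dag_dag

theorem IsPath.t_getLast : ∀ {l : List G.A} {s e : Option G.V},
    G.IsPath l s e → ∀ (h : l ≠ []), G.t (l.getLast h) = e
  | [], _, _, _, h => absurd rfl h
  | [_], _, _, hp, _ => hp.2
  | _ :: b :: l, _, _, hp, _ => IsPath.t_getLast (l := b :: l) hp.2 (List.cons_ne_nil _ _)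

theorem IsPath.t_getElem_eq : ∀ {l : List G.A} {s e : Option G.V},
    G.IsPath l s e → ∀ (i : ℕ) (h : i + 1 < l.length), G.t l[i] = G.t (G.dag l[i + 1])
  | _ :: _ :: _, _, _, hp, 0, _ => hp.2.1.symm
  | _ :: b :: l, _, _, hp, i + 1, h =>
    IsPath.t_getElem_eq (l := b :: l) hp.2 i (by simpa using h)

theorem IsPath.t_dag_getElem_zero : ∀ {l : List G.A} {s e : Option G.V},
    G.IsPath l s e → ∀ (h : 0 < l.length), G.t (G.dag l[0]) = s
  | _ :: _, _, _, hp, _ => hp.1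

theorem Bivalent.eq_or_eq {w : H.V} (hw : H.Bivalent w) {x y z : H.A} (hx : H.t x = some w)
    (hy : H.t y = some w) (hxy : x ≠ y) (hz : H.t z = some w) : z = x ∨ z = y := by
  obtain ⟨p, q, hpq, huniv⟩ := Nat.card_eq_two_iff.mp hw
  have hmem (c : {c : H.A // H.t c = some w}) : c = p ∨ c = q := by
    have hc : c ∈ ({p, q} : Set _) := huniv ▸ Set.mem_univ c
    simpa using hc
  rcases hmem ⟨x, hx⟩ with h₁ | h₁ <;> rcases hmem ⟨y, hy⟩ with h₂ | h₂ <;>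
    rcases hmem ⟨z, hz⟩ with h₃ | h₃ <;> simp_all [Subtype.ext_iff]

theorem Connected.mem_of_touch_iff (hG : G.Connected) {S : Set (G.V ⊕ G.A)}
    (hS : ∀ x y, G.Touch x y → (x ∈ S ↔ y ∈ S)) {x : G.V ⊕ G.A} (hx : x ∈ S)
    (y : G.V ⊕ G.A) : y ∈ S := by
  suffices ∀ x y, Relation.EqvGen G.Touch x y → (x ∈ S ↔ y ∈ S) from
    (this x y (hG.2 x y)).mp hx
  intro x y h
  induction h with
  | rel _ _ h => exact hS _ _ h
  | refl => exact Iff.rfl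
  | symm _ _ _ ih => exact ih.symm
  | trans _ _ _ _ _ ih₁ ih₂ => exact ih₁.trans ih₂

theorem Connected.exists_t_eq_some (hG : G.Connected) (a : G.A) (v : G.V) :
    ∃ c, G.t c = some v := by
  by_contra! hv
  have hS : ∀ x y, G.Touch x y → (x ∈ ({.inl v} : Set _) ↔ y ∈ ({.inl v} : Set _)) := by
    rintro _ _ (a' | ⟨a', v', h⟩)
    · simp
    · refine iff_of_false (by simp) ?_
      rintro ⟨⟩
      exact hv a' h
  simpa using hG.mem_of_touch_iff hS rfl (.inr a)

theorem Connected.eq_inr_or_eq_inr_dag (hG : G.Connected) {a : G.A} (ht : G.t a = none)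
    (ht' : G.t (G.dag a) = none) (x : G.V ⊕ G.A) :
    x = .inr a ∨ x = .inr (G.dag a) := by
  let S : Set (G.V ⊕ G.A) := {.inr a, .inr (G.dag a)}
  have hS : ∀ x y, G.Touch x y → (x ∈ S ↔ y ∈ S) := by
    rintro _ _ (a' | ⟨a', v', h⟩)
    · simp only [S, Set.mem_insert_iff, Set.mem_singleton_iff, Sum.inr.injEq]
      rw [G.dag_involutive.eq_iff, G.dag_involutive.eq_iff, G.dag_dag, or_comm]
    · refine iff_of_false ?_ (by simp [S])
      rintro (⟨⟩ | ⟨⟩) <;> simp_all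
  exact hG.mem_of_touch_iff hS (Set.mem_insert _ _) x

namespace FiberList

variable {f : PreMap G H} {a : G.A} {l : List H.A}

theorem mem (hl : FiberList f a l) {b : H.A} (hb : f.fa b = a) : b ∈ l := (hl.1 b).2 hb

theorem fa_eq (hl : FiberList f a l) {b : H.A} (hb : b ∈ l) : f.fa b = a := (hl.1 b).1 hb

theorem t_getLast (hl : FiberList f a l) (h : l ≠ []) :
    H.t (l.getLast h) = f.fv (G.t a) :=
  hl.2.2.1.t_getLast h

end FiberList

section Inert

variable {f : PreMap G H} {g : PreMap H K}

theorem IsInert.comp (hif : IsInert f) (hig : IsInert g) (hf : IsGraphMap f)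
    (hg : IsGraphMap g) : IsInert (f.comp g) := by
  refine ⟨fun w => ?_, fun a ha => ?_⟩
  · obtain ⟨u, hu, hu_unique⟩ := hig.1 w
    obtain ⟨v, hv, hv_unique⟩ := hif.1 u
    refine ⟨v, by simp [PreMap.comp, hv, hu], fun v' hv' => hv_unique v' ?_⟩
    change g.fv (f.fv (some v')) = some w at hv'
    cases h : f.fv (some v') with
    | none => rw [h, hg.1] at hv'; cases hv'
    | some u' => rw [h] at hv'; rw [hu_unique u' hv']
  · change g.fv (f.fv (G.t a)) = none
    by_cases hfib : ∃ b, f.fa b = a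
    · obtain ⟨b, hb⟩ := hfib
      obtain ⟨l, hl⟩ := hf.2.2.1 a
      have hne : l ≠ [] := List.ne_nil_of_mem (hl.mem hb)
      rw [← hl.t_getLast hne]
      refine hig.2 _ fun c hc => ha c ?_
      simp [PreMap.comp, hc, hl.fa_eq (List.getLast_mem hne)]
    · push Not at hfib
      rw [hif.2 a hfib, hg.1]

end Inert

section Active

variable {f : PreMap G H} {g : PreMap H K}

theorem IsActive.eq_getLast_of_t_eq_none (ha : IsActive f) {a : G.A} {l : List H.A}
    (hl : FiberList f a l) {b : H.A} (hb : b ∈ l) (ht : H.t b = none) :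
    b = l.getLast (List.ne_nil_of_mem hb) :=
  List.eq_getLast_of_not_of_forall_get (P := fun b => H.t b ≠ none) (ha.2 a l hl) hb
    (not_not.mpr ht)

theorem IsActive.t_fa_eq_none (ha : IsActive f) (hf : IsGraphMap f) {b : H.A}
    (ht : H.t b = none) : G.t (f.fa b) = none := by
  obtain ⟨l, hl⟩ := hf.2.2.1 (f.fa b)
  have hb : b ∈ l := hl.mem rfl
  refine ha.1 _ ?_
  rw [← hl.t_getLast (List.ne_nil_of_mem hb), ← ha.eq_getLast_of_t_eq_none hl hb ht, ht]

theorem IsActive.eq_of_fa_eq (ha : IsActive f) (hf : IsGraphMap f) {b b' : H.A}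
    (h : f.fa b = f.fa b') (ht : H.t b = none) (ht' : H.t b' = none) : b = b' := by
  obtain ⟨l, hl⟩ := hf.2.2.1 (f.fa b)
  rw [ha.eq_getLast_of_t_eq_none hl (hl.mem rfl) ht,
    ha.eq_getLast_of_t_eq_none hl (hl.mem h.symm) ht']

theorem IsActive.comp (haf : IsActive f) (hag : IsActive g) (hf : IsGraphMap f)
    (hg : IsGraphMap g) : IsActive (f.comp g) := by
  have t_fa_eq_none {b : K.A} (hb : K.t b = none) : G.t (f.fa (g.fa b)) = none :=
    haf.t_fa_eq_none hf (hag.t_fa_eq_none hg hb)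
  have eq_of_fa_eq {b b' : K.A} (h : f.fa (g.fa b) = f.fa (g.fa b')) (hb : K.t b = none)
      (hb' : K.t b' = none) : b = b' :=
    hag.eq_of_fa_eq hg (haf.eq_of_fa_eq hf h (hag.t_fa_eq_none hg hb)
      (hag.t_fa_eq_none hg hb')) hb hb'
  have fa_dag (b : K.A) : f.fa (g.fa (K.dag b)) = G.dag (f.fa (g.fa b)) := by
    rw [hg.2.1, hf.2.1]
  refine ⟨fun x hx => haf.1 x (hag.1 _ hx), fun a l hl i hi hnone => ?_⟩
  simp only [List.get_eq_getElem] at hnone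
  have hp := hl.2.2.1
  have hnext : K.t (K.dag l[i + 1]) = none := hp.t_getElem_eq i hi ▸ hnone
  have hnext_fa : f.fa (g.fa (K.dag l[i + 1])) = G.dag a := by
    rw [fa_dag]
    exact congrArg G.dag (hl.fa_eq (List.getElem_mem _))
  have hhead : K.t (K.dag l[0]) = none := by
    rw [hp.t_dag_getElem_zero]
    change g.fv (f.fv (G.t (G.dag a))) = none
    rw [← hnext_fa, t_fa_eq_none hnext, hf.1, hg.1]
  have hhead_fa : f.fa (g.fa (K.dag l[0])) = G.dag a := by
    rw [fa_dag]
    exact congrArg G.dag (hl.fa_eq (List.getElem_mem _))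
  have := eq_of_fa_eq (hnext_fa.trans hhead_fa.symm) hnext hhead
  simp [K.dag_involutive.injective.eq_iff, hl.2.1.getElem_inj_iff] at this

end Active

section Iso

variable {f : PreMap G H}

theorem IsGraphMap.exists_fa_eq_and_t_eq (hf : IsGraphMap f) (hsurj : Function.Surjective f.fa)
    (a : G.A) : ∃ b, f.fa b = a ∧ H.t b = f.fv (G.t a) := by
  obtain ⟨l, hl⟩ := hf.2.2.1 a
  obtain ⟨b, hb⟩ := hsurj a
  have hne : l ≠ [] := List.ne_nil_of_mem (hl.mem hb)
  exact ⟨l.getLast hne, hl.fa_eq (List.getLast_mem hne), hl.t_getLast hne⟩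

theorem isGraphIso_of_bijective (hf : IsGraphMap f) (hv : Function.Bijective f.fv)
    (ha : Function.Bijective f.fa) (ht : ∀ b, H.t b = f.fv (G.t (f.fa b))) : IsGraphIso f := by
  set ev := Equiv.ofBijective _ hv
  set ea := Equiv.ofBijective _ ha
  have hv_none : ev.symm none = none := ev.symm_apply_eq.mpr hf.1.symm
  have ht' (b : H.A) : ev.symm (H.t b) = G.t (ea b) := ev.symm_apply_eq.mpr (ht b)
  refine ⟨hf, ⟨ev.symm, ea.symm⟩, ⟨hv_none, fun a => ?_, fun b => ?_, fun w w' h _ => ?_,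
    fun v hv' => ?_⟩, ?_, ?_⟩
  · exact ea.injective (by simp [ea, hf.2.1, Equiv.ofBijective_apply_symm_apply])
  · refine ⟨[ea b], fun a => by simp [ea.symm_apply_eq], List.nodup_singleton _,
      ⟨?_, ?_⟩, fun i h => by simp at h⟩
    · change G.t (G.dag (ea b)) = ev.symm (H.t (H.dag b))
      simp [ht', ea, hf.2.1]
    · exact (ht' b).symm
  · obtain rfl : w = w' := Option.some_injective _ (ev.symm.injective h)
    exact ⟨[], by simp, rfl⟩
  · obtain ⟨w, hw⟩ := Option.ne_none_iff_exists'.mp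
      fun h => Option.some_ne_none v (hv.1 (h.trans hf.1.symm))
    exact absurd (ev.symm_apply_eq.mpr hw.symm) (hv' w)
  · change PreMap.mk (ev.symm ∘ ev) (ea ∘ ea.symm) = ⟨id, id⟩
    rw [Equiv.symm_comp_self, Equiv.self_comp_symm]
  · change PreMap.mk (ev ∘ ev.symm) (ea.symm ∘ ea) = ⟨id, id⟩
    rw [Equiv.symm_comp_self, Equiv.self_comp_symm]

theorem IsInert.fv_bijective (hi : IsInert f) (ha : IsActive f) (hf : IsGraphMap f) :
    Function.Bijective f.fv := by
  refine ⟨fun x y h => ?_, fun y => ?_⟩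
  · match x, y, h with
    | none, none, _ => rfl
    | none, some v, h => exact absurd (ha.1 _ (h.symm.trans hf.1)) (Option.some_ne_none v)
    | some v, none, h => exact absurd (ha.1 _ (h.trans hf.1)) (Option.some_ne_none v)
    | some v, some v', h =>
      obtain ⟨w, hw⟩ := Option.ne_none_iff_exists'.mp fun h => Option.some_ne_none v (ha.1 _ h)
      obtain ⟨u, -, hu⟩ := hi.1 w
      rw [hu v hw, hu v' (h.symm.trans hw)]
  · cases y with
    | none => exact ⟨none, hf.1⟩
    | some w =>
      obtain ⟨v, hv, -⟩ := hi.1 w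
      exact ⟨some v, hv⟩

theorem IsInert.fa_surjective (hi : IsInert f) (ha : IsActive f) (hG : G.Connected)
    (hH : H.Connected) (hf : IsGraphMap f) : Function.Surjective f.fa := by
  intro a
  by_contra! hno
  have hno' (b : H.A) : f.fa b ≠ G.dag a := fun hb =>
    hno (H.dag b) (by rw [hf.2.1, hb, G.dag_dag])
  have hcomp := hG.eq_inr_or_eq_inr_dag (ha.1 _ (hi.2 a hno)) (ha.1 _ (hi.2 _ hno'))
  obtain ⟨w | b⟩ := hH.1
  · obtain ⟨v, -, -⟩ := hi.1 w
    simpa using hcomp (.inl v)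
  · rcases hcomp (.inr (f.fa b)) with h | h
    · exact hno b (Sum.inr_injective h)
    · exact hno' b (Sum.inr_injective h)

theorem IsInert.not_fiberList_cons_cons (hi : IsInert f) (ha : IsActive f) (hG : G.Connected)
    (hf : IsGraphMap f) (hsurj : Function.Surjective f.fa) {a : G.A} {b₁ b₂ : H.A}
    {l : List H.A} : ¬ FiberList f a (b₁ :: b₂ :: l) := by
  intro hl
  have hfa₁ : f.fa b₁ = a := hl.fa_eq (by simp)
  have hfa₂ : f.fa b₂ = a := hl.fa_eq (by simp)
  have hb₁ : b₁ ∉ b₂ :: l := (List.nodup_cons.mp hl.2.1).1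
  have hstart : H.t (H.dag b₁) = f.fv (G.t (G.dag a)) := hl.2.2.1.1
  have hmid : H.t (H.dag b₂) = H.t b₁ := hl.2.2.1.2.1
  obtain ⟨w, hw, hbiv⟩ : ∃ w, H.t b₁ = some w ∧ H.Bivalent w := by
    rcases hl.2.2.2 0 (by simp) with h | h
    · exact absurd h (ha.2 a _ hl 0 (by simp))
    · exact h
  have harcs (c : H.A) (hc : H.t c = some w) : c = b₁ ∨ c = H.dag b₂ :=
    hbiv.eq_or_eq hw (hmid.trans hw)
      (fun h => G.dag_ne a (by simpa [h, hf.2.1, hfa₂] using hfa₁)) hc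
  -- the preimage of `w` has an incoming arc, whose fibre path ends at `b₁` or at `b₂†`
  obtain ⟨v, hv, -⟩ := hi.1 w
  obtain ⟨c, hc⟩ := hG.exists_t_eq_some a v
  obtain ⟨b, rfl, hb⟩ := hf.exists_fa_eq_and_t_eq hsurj c
  rw [hc, hv] at hb
  rcases harcs b hb with h | h
  · rw [h, hfa₁] at hc
    have hlast := hl.t_getLast (List.cons_ne_nil _ _)
    rw [hc, hv] at hlast
    rcases harcs _ hlast with h | h
    · exact hb₁ (h ▸ List.getLast_mem _)
    · have := hl.fa_eq (List.getLast_mem (List.cons_ne_nil _ _))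
      rw [h, hf.2.1, hfa₂] at this
      exact G.dag_ne a this
  · rw [h, hf.2.1, hfa₂] at hc
    rw [hc, hv] at hstart
    rcases harcs _ hstart with h | h
    · exact H.dag_ne b₁ h
    · exact hb₁ (H.dag_involutive.injective h ▸ List.mem_cons_self)

theorem IsInert.fiberList_eq_singleton (hi : IsInert f) (ha : IsActive f) (hG : G.Connected)
    (hf : IsGraphMap f) (hsurj : Function.Surjective f.fa) {a : G.A} {l : List H.A}
    (hl : FiberList f a l) : ∃ b, l = [b] :=
  match l, hl with
  | [], hl => absurd (hl.mem (hsurj a).choose_spec) List.not_mem_nil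
  | [b], _ => ⟨b, rfl⟩
  | _ :: _ :: _, hl => absurd hl (hi.not_fiberList_cons_cons ha hG hf hsurj)

theorem IsInert.isGraphIso (hi : IsInert f) (ha : IsActive f) (hG : G.Connected)
    (hH : H.Connected) (hf : IsGraphMap f) : IsGraphIso f := by
  have hsurj := hi.fa_surjective ha hG hH hf
  have hfiber (b : H.A) : FiberList f (f.fa b) [b] := by
    obtain ⟨l, hl⟩ := hf.2.2.1 (f.fa b)
    obtain ⟨x, rfl⟩ := hi.fiberList_eq_singleton ha hG hf hsurj hl
    obtain rfl := List.mem_singleton.mp (hl.mem rfl)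
    exact hl
  exact isGraphIso_of_bijective hf (hi.fv_bijective ha hf)
    ⟨fun b b' h => (List.mem_singleton.mp ((hfiber b).mem h.symm)).symm, hsurj⟩
    fun b => (hfiber b).t_getLast (List.cons_ne_nil _ _)

end Iso

end CGraph

open CGraph in
theorem inert_active_closure_and_iso :
    (∀ (G H K : CGraph), G.Connected → H.Connected → K.Connected →
      ∀ (f : PreMap G H) (g : PreMap H K), IsGraphMap f → IsGraphMap g →
        IsInert f → IsInert g → IsInert (f.comp g)) ∧
    (∀ (G H K : CGraph), G.Connected → H.Connected → K.Connected →
      ∀ (f : PreMap G H) (g : PreMap H K), IsGraphMap f → IsGraphMap g →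
        IsActive f → IsActive g → IsActive (f.comp g)) ∧
    (∀ (G H : CGraph), G.Connected → H.Connected →
      ∀ f : PreMap G H, IsGraphMap f → IsInert f → IsActive f → IsGraphIso f) :=
  ⟨fun _ _ _ _ _ _ _ _ hf hg hif hig => hif.comp hig hf hg,
    fun _ _ _ _ _ _ _ _ hf hg haf hag => haf.comp hag hf hg,
    fun _ _ hG hH _ hf hi ha => hi.isGraphIso ha hG hH hf⟩
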